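/- Let φ : [0,∞) → (0,1] satisfy φ(ξ) → 0 as ξ → ∞. Then there exists a dense G_δ set A ⊆ [0,1] such that for all t ∈ A, limsup_{ξ → ∞} |μ̂_t(ξ)| / φ(ξ) > 0. -/

import Mathlib

open MeasureTheory Filter Set
open scoped ENNReal NNReal

/-- The Fourier transform of a measure on `ℝ`: `μ̂(ξ) = ∫ e^{2πiξx} dμ(x)`. -/
noncomputable def ft (μ : Measure ℝ) (ξ : ℝ) : ℂ :=
  ∫ x, Complex.exp (((2 * Real.pi * ξ * x : ℝ) : ℂ) * Complex.I) ∂μ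

/-- `μ_t` is invariant for the IFS `{x/10, (x+1)/10, (x+t)/10}` with weights `(1/3,1/3,1/3)`. -/
def muInv (t : ℝ) (μ : Measure ℝ) : Prop :=
  μ = (3 : ℝ≥0∞)⁻¹ • (Measure.map (fun x : ℝ => x / 10) μ +
    Measure.map (fun x : ℝ => (x + 1) / 10) μ + Measure.map (fun x : ℝ => (x + t) / 10) μ)

/-!
Self-similarity gives `μ̂(10ξ) = m_t(ξ) μ̂(ξ)` with `m_t(ξ) = (1 + e(ξ) + e(tξ)) / 3`, hence
`μ̂(10^(m+N)) = μ̂(1) ∏_{i < m+N} m_t(10^i)`. At integers `|m_t| ≥ 1/3`, and if `t` lies within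
`10^-(m+N+1)` of a decimal `a / 10^m`, then `t 10^(m+k)` lies within `10^(k-N-1)` of an integer for
`k < N`, so the last `N` factors have product at least `1/2`. Thus
`|μ̂(10^(m+N))| ≥ 3^-m |μ̂(1)| / 2`, where `μ̂(1) ≠ 0` because `μ̂` is continuous with `μ̂(0) = 1`
and `m_t` does not vanish near `0`. Choosing `N = N(m, j) ≥ j` with `φ(10^(m+N)) ≤ 3^-m`, the points of
`[0,1]` that for every `j` lie within `10^-(m+N(m,j)+1)` of some `a / 10^m` form a dense `G_δ` set.
-/

open Real Complex BoundedContinuousFunction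

section CharFun

variable {E : Type*} [MeasurableSpace E] [NormedAddCommGroup E] [InnerProductSpace ℝ E]

lemma charFun_add_measure [BorelSpace E] (μ ν : Measure E) [IsFiniteMeasure μ]
    [IsFiniteMeasure ν] (t : E) :
    charFun (μ + ν) t = charFun μ t + charFun ν t := by
  simp only [charFun_eq_integral_innerProbChar]
  exact integral_add_measure ((innerProbChar t).integrable μ) ((innerProbChar t).integrable ν)

lemma charFun_smul_measure (c : ℝ≥0∞) (μ : Measure E) (t : E) :
    charFun (c • μ) t = c.toReal • charFun μ t :=
  integral_smul_measure _ c

end CharFun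

lemma charFun_map_add_div (μ : Measure ℝ) (b c s : ℝ) :
    charFun (μ.map fun x ↦ (x + b) / c) s = cexp (↑(b * (s / c)) * I) * charFun μ (s / c) := by
  have : (fun x : ℝ ↦ (x + b) / c) = fun x ↦ c⁻¹ * (x + b) := by ext; ring
  rw [this, charFun_map_mul_comp (measurable_add_const b).aemeasurable, charFun_map_add_const,
    mul_comm, inv_mul_eq_div]
  simp [mul_comm]

lemma ft_eq_charFun (μ : Measure ℝ) (ξ : ℝ) : ft μ ξ = charFun μ (2 * π * ξ) := by
  rw [ft, charFun_apply_real]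
  congr 1 with x
  push_cast
  ring_nf

/-- The Fourier transform of `(δ₀ + δ₁ + δ_t) / 3`. -/
noncomputable def mask (t ξ : ℝ) : ℂ :=
  (1 + cexp (↑(2 * π * ξ) * I) + cexp (↑(2 * π * (t * ξ)) * I)) / 3

lemma ft_ten_mul {t : ℝ} {μ : Measure ℝ} [IsFiniteMeasure μ] (h : muInv t μ) (ξ : ℝ) :
    ft μ (10 * ξ) = mask t ξ * ft μ ξ := by
  have h₀ : (fun x : ℝ ↦ x / 10) = fun x ↦ (x + 0) / 10 := by simp
  rw [ft_eq_charFun, ft_eq_charFun]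
  conv_lhs => rw [h]
  rw [charFun_smul_measure, charFun_add_measure, charFun_add_measure, h₀,
    charFun_map_add_div, charFun_map_add_div, charFun_map_add_div, mask,
    show 2 * π * (10 * ξ) / 10 = 2 * π * ξ by ring]
  simp only [ENNReal.toReal_inv, ENNReal.toReal_ofNat, Complex.real_smul, zero_mul, ofReal_zero,
    Complex.exp_zero]
  push_cast
  ring_nf

lemma ft_ten_pow_mul {t : ℝ} {μ : Measure ℝ} [IsFiniteMeasure μ] (h : muInv t μ) (n : ℕ) (ξ : ℝ) :
    ft μ (10 ^ n * ξ) = (∏ i ∈ Finset.range n, mask t (10 ^ i * ξ)) * ft μ ξ := by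
  induction n with
  | zero => simp
  | succ n ih => rw [pow_succ', mul_assoc, ft_ten_mul h, ih, Finset.prod_range_succ]; ring

lemma mask_intCast (t : ℝ) (n : ℤ) : mask t n = (2 + cexp (↑(2 * π * (t * n)) * I)) / 3 := by
  have hn : (↑(2 * π * n) : ℂ) * I = n * (2 * π * I) := by push_cast; ring
  rw [mask, hn, Complex.exp_int_mul_two_pi_mul_I]
  ring

lemma one_third_le_norm_mask_intCast (t : ℝ) (n : ℤ) : 1 / 3 ≤ ‖mask t n‖ := by
  have h := norm_sub_norm_le (2 : ℂ) (-cexp (↑(2 * π * (t * n)) * I))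
  rw [sub_neg_eq_add, norm_neg, Complex.norm_exp_ofReal_mul_I, Complex.norm_two] at h
  rw [mask_intCast, norm_div, Complex.norm_ofNat]
  linarith

lemma one_sub_three_mul_abs_le_norm_mask_intCast (t ε : ℝ) (n k : ℤ) (h : t * n = k + ε) :
    1 - 3 * |ε| ≤ ‖mask t n‖ := by
  have hk : (↑(2 * π * (t * n)) : ℂ) * I = k * (2 * π * I) + I * ↑(2 * π * ε) := by
    rw [h]; push_cast; ring
  have hmask : mask t n = 1 - (1 - cexp (I * ↑(2 * π * ε))) / 3 := by
    rw [mask_intCast, hk, Complex.exp_add, Complex.exp_int_mul_two_pi_mul_I]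
    ring
  have hexp : ‖1 - cexp (I * ↑(2 * π * ε))‖ ≤ 2 * π * |ε| := by
    rw [norm_sub_rev]
    refine norm_exp_I_mul_ofReal_sub_one_le.trans_eq ?_
    rw [Real.norm_eq_abs, abs_mul, abs_of_pos (by positivity)]
  have h1 := norm_sub_norm_le (1 : ℂ) ((1 - cexp (I * ↑(2 * π * ε))) / 3)
  rw [norm_one, norm_div, Complex.norm_ofNat, ← hmask] at h1
  nlinarith [pi_le_four, abs_nonneg ε]

lemma mask_ne_zero {t ξ : ℝ} (ht : |t| ≤ 1) (hξ : |ξ| ≤ 1 / 4) : mask t ξ ≠ 0 := by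
  have hcos : ∀ y : ℝ, |y| ≤ 1 / 4 → 0 ≤ Real.cos (2 * π * y) := fun y hy ↦ by
    obtain ⟨hy₁, hy₂⟩ := abs_le.1 hy
    exact cos_nonneg_of_neg_pi_div_two_le_of_le (by nlinarith [pi_pos]) (by nlinarith [pi_pos])
  have htξ : |t * ξ| ≤ 1 / 4 := by
    rw [abs_mul]; nlinarith [abs_nonneg t, abs_nonneg ξ]
  intro h0
  have hre := congrArg Complex.re h0
  simp only [mask, Complex.div_ofNat_re, Complex.add_re, Complex.one_re,
    Complex.exp_ofReal_mul_I_re, Complex.zero_re] at hre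
  linarith [hcos ξ hξ, hcos _ htξ]

lemma ft_one_ne_zero {t : ℝ} {μ : Measure ℝ} [IsProbabilityMeasure μ] (h : muInv t μ)
    (ht : |t| ≤ 1) : ft μ 1 ≠ 0 := by
  have hcont : Continuous (ft μ) := by
    rw [show ft μ = fun ξ ↦ charFun μ (2 * π * ξ) from funext (ft_eq_charFun μ)]
    fun_prop
  have hft0 : ft μ 0 ≠ 0 := by simp [ft_eq_charFun]
  have hlim : Tendsto (fun n : ℕ ↦ ((10 : ℝ) ^ n)⁻¹) atTop (nhds 0) :=
    tendsto_inv_atTop_zero.comp (tendsto_pow_atTop_atTop_of_one_lt (by norm_num))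
  obtain ⟨n, hn⟩ := (((hcont.tendsto 0).comp hlim).eventually_ne hft0).exists
  have hprod := ft_ten_pow_mul h n ((10 : ℝ) ^ n)⁻¹
  rw [mul_inv_cancel₀ (by positivity)] at hprod
  rw [hprod]
  refine mul_ne_zero (Finset.prod_ne_zero_iff.2 fun i hi ↦ mask_ne_zero ht ?_) hn
  have hi : (10 : ℝ) ^ i * 10 ≤ 10 ^ n :=
    (pow_succ (10 : ℝ) i).symm.trans_le (pow_le_pow_right₀ (by norm_num) (Finset.mem_range.1 hi))
  rw [abs_of_pos (by positivity), ← div_eq_mul_inv, div_le_iff₀ (by positivity)]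
  linarith [pow_pos (by norm_num : (0 : ℝ) < 10) i]

lemma Finset.one_sub_sum_le_prod_one_sub {ι : Type*} (s : Finset ι) {f : ι → ℝ}
    (h₀ : ∀ i ∈ s, 0 ≤ f i) (h₁ : ∀ i ∈ s, f i ≤ 1) : 1 - ∑ i ∈ s, f i ≤ ∏ i ∈ s, (1 - f i) := by
  classical
  induction s using Finset.induction_on with
  | empty => simp
  | insert a s ha ih =>
    rw [Finset.sum_insert ha, Finset.prod_insert ha]
    have hs := ih (fun i hi ↦ h₀ i (Finset.mem_insert_of_mem hi))
      (fun i hi ↦ h₁ i (Finset.mem_insert_of_mem hi))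
    have hP : ∏ i ∈ s, (1 - f i) ≤ 1 := Finset.prod_le_one
      (fun i hi ↦ by linarith [h₁ i (Finset.mem_insert_of_mem hi)])
      (fun i hi ↦ by linarith [h₀ i (Finset.mem_insert_of_mem hi)])
    nlinarith [h₀ a (Finset.mem_insert_self a s), h₁ a (Finset.mem_insert_self a s)]

lemma half_le_prod_norm_mask {t : ℝ} {a : ℤ} {m N : ℕ}
    (ha : |t - a / 10 ^ m| ≤ 1 / 10 ^ (m + N + 1)) :
    1 / 2 ≤ ∏ k ∈ Finset.range N, ‖mask t (10 ^ (m + k))‖ := by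
  set b : ℕ → ℝ := fun k ↦ 3 * (10 ^ k / 10 ^ (N + 1))
  have hfactor : ∀ k ∈ Finset.range N, 1 - b k ≤ ‖mask t (10 ^ (m + k))‖ := fun k _ ↦ by
    have hε : |(t - a / 10 ^ m) * 10 ^ (m + k)| ≤ 10 ^ k / 10 ^ (N + 1) := by
      rw [abs_mul, abs_of_pos (a := (10 : ℝ) ^ (m + k)) (by positivity)]
      calc |t - a / 10 ^ m| * 10 ^ (m + k) ≤ 1 / 10 ^ (m + N + 1) * 10 ^ (m + k) := by gcongr
        _ = 10 ^ k / 10 ^ (N + 1) := by field_simp; ring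
    have hint : t * ((10 ^ (m + k) : ℤ) : ℝ)
        = ((a * 10 ^ k : ℤ) : ℝ) + (t - a / 10 ^ m) * 10 ^ (m + k) := by
      push_cast; field_simp; ring
    have := one_sub_three_mul_abs_le_norm_mask_intCast t _ _ _ hint
    push_cast at this
    linarith
  have hsmall : ∀ x : ℝ, x ≤ 10 ^ N → 3 * (x / 10 ^ (N + 1)) ≤ 3 / 10 := fun x hx ↦ by
    calc 3 * (x / 10 ^ (N + 1)) ≤ 3 * (10 ^ N / 10 ^ (N + 1)) := by gcongr
      _ = 3 / 10 := by rw [pow_succ]; field_simp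
  have hb : ∀ k ∈ Finset.range N, b k ≤ 3 / 10 := fun k hk ↦
    hsmall _ (pow_le_pow_right₀ (by norm_num) (Finset.mem_range.1 hk).le)
  have hsum : ∑ k ∈ Finset.range N, b k ≤ 3 / 10 := by
    simp only [b, ← Finset.mul_sum, ← Finset.sum_div]
    exact hsmall _ (by exact_mod_cast (Nat.geomSum_lt (m := 10) (by norm_num)
      fun k hk ↦ Finset.mem_range.1 hk).le)
  calc (1 : ℝ) / 2 ≤ 1 - ∑ k ∈ Finset.range N, b k := by linarith
    _ ≤ ∏ k ∈ Finset.range N, (1 - b k) :=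
      Finset.one_sub_sum_le_prod_one_sub _ (fun k _ ↦ by positivity)
        (fun k hk ↦ (hb k hk).trans (by norm_num))
    _ ≤ _ := Finset.prod_le_prod (fun k hk ↦ by linarith [hb k hk]) hfactor

lemma norm_ft_ten_pow_ge {t : ℝ} {μ : Measure ℝ} [IsFiniteMeasure μ] (h : muInv t μ) {a : ℤ}
    {m N : ℕ} (ha : |t - a / 10 ^ m| ≤ 1 / 10 ^ (m + N + 1)) :
    (1 / 3) ^ m * ‖ft μ 1‖ / 2 ≤ ‖ft μ (10 ^ (m + N))‖ := by
  have hprod := ft_ten_pow_mul h (m + N) 1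
  simp only [mul_one, Finset.prod_range_add] at hprod
  have hfirst : (1 / 3 : ℝ) ^ m ≤ ∏ i ∈ Finset.range m, ‖mask t (10 ^ i)‖ := by
    calc (1 / 3 : ℝ) ^ m = ∏ _i ∈ Finset.range m, (1 / 3 : ℝ) := by
          rw [Finset.prod_const, Finset.card_range]
      _ ≤ _ := Finset.prod_le_prod (fun _ _ ↦ by norm_num) fun i _ ↦ by
          exact_mod_cast one_third_le_norm_mask_intCast t (10 ^ i)
  rw [hprod, norm_mul, norm_mul, norm_prod, norm_prod]
  calc (1 / 3) ^ m * ‖ft μ 1‖ / 2 = (1 / 3) ^ m * (1 / 2) * ‖ft μ 1‖ := by ring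
    _ ≤ _ := by gcongr; exact half_le_prod_norm_mask ha

lemma Icc_subset_closure_Icc_inter_of_decimal_mem {S : Set ℝ}
    (hS : ∀ a m : ℕ, (a : ℝ) / 10 ^ m ∈ S) : Icc 0 1 ⊆ closure (Icc 0 1 ∩ S) := by
  rintro x ⟨hx₀, hx₁⟩
  set y : ℕ → ℝ := fun m ↦ ⌊x * 10 ^ m⌋₊ / 10 ^ m
  have hy_le : ∀ m, y m ≤ x := fun m ↦
    (div_le_iff₀ (by positivity)).2 (Nat.floor_le (by positivity))
  have hy_ge : ∀ m, x - 1 / 10 ^ m ≤ y m := fun m ↦ by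
    rw [sub_le_iff_le_add, ← add_div, le_div_iff₀ (by positivity)]
    exact (Nat.lt_floor_add_one _).le
  have hlim : Tendsto (fun m : ℕ ↦ x - 1 / 10 ^ m) atTop (nhds x) := by
    have h10 : Tendsto (fun m : ℕ ↦ (1 : ℝ) / 10 ^ m) atTop (nhds 0) := by
      simpa only [one_div_pow] using tendsto_pow_atTop_nhds_zero_of_lt_one
        (by norm_num : (0 : ℝ) ≤ 1 / 10) (by norm_num)
    simpa using tendsto_const_nhds.sub h10
  refine mem_closure_of_tendsto (tendsto_of_tendsto_of_tendsto_of_le_of_le hlim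
    tendsto_const_nhds hy_ge hy_le) (Eventually.of_forall fun m ↦ ⟨⟨by positivity, ?_⟩, hS _ _⟩)
  exact (hy_le m).trans hx₁

lemma exists_ge_apply_ten_pow_le {φ : ℝ → ℝ} (hφ : Tendsto φ atTop (nhds 0)) (m j : ℕ) :
    ∃ N, j ≤ N ∧ φ (10 ^ (m + N)) ≤ (1 / 3) ^ m := by
  have hpow : Tendsto (fun N : ℕ ↦ (10 : ℝ) ^ (m + N)) atTop atTop :=
    (tendsto_pow_atTop_atTop_of_one_lt (by norm_num)).comp
      (tendsto_atTop_mono (fun N ↦ Nat.le_add_left N m) tendsto_id)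
  exact ((eventually_ge_atTop j).and ((hφ.comp hpow).eventually
    (eventually_le_nhds (by positivity)))).exists

theorem stmt11_general (φ : ℝ → ℝ)
    (hφ0 : Tendsto φ atTop (nhds 0)) :
    ∃ A : Set ℝ, A ⊆ Set.Icc 0 1 ∧ IsGδ A ∧ Set.Icc (0 : ℝ) 1 ⊆ closure A ∧
      ∀ t ∈ A, ∀ μ : Measure ℝ, IsProbabilityMeasure μ → muInv t μ →
        ∃ C > 0, ∃ᶠ ξ : ℝ in atTop, C * φ ξ ≤ ‖ft μ ξ‖ := by
  choose N hjN hφN using exists_ge_apply_ten_pow_le hφ0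
  set U : ℕ → Set ℝ := fun j ↦
    ⋃ (a : ℕ) (m : ℕ), Metric.ball ((a : ℝ) / 10 ^ m) (1 / 10 ^ (m + N m j + 1))
  refine ⟨Icc 0 1 ∩ ⋂ j, U j, inter_subset_left, ?_, ?_, ?_⟩
  · exact isClosed_Icc.isGδ.inter (.iInter fun j ↦
      (isOpen_iUnion fun a ↦ isOpen_iUnion fun m ↦ Metric.isOpen_ball).isGδ)
  · exact Icc_subset_closure_Icc_inter_of_decimal_mem fun a m ↦
      mem_iInter.2 fun j ↦ mem_iUnion₂.2 ⟨a, m, Metric.mem_ball_self (by positivity)⟩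
  rintro t ⟨ht, htU⟩ μ hμ h
  have ht' : |t| ≤ 1 := abs_le.2 ⟨by linarith [ht.1], ht.2⟩
  refine ⟨(1 / 2) * ‖ft μ 1‖, mul_pos one_half_pos (norm_pos_iff.2 (ft_one_ne_zero h ht')), ?_⟩
  refine frequently_atTop.2 fun b ↦ ?_
  obtain ⟨j, hj⟩ := pow_unbounded_of_one_lt b (by norm_num : (1 : ℝ) < 10)
  obtain ⟨a, m, hball⟩ := mem_iUnion₂.1 (mem_iInter.1 htU j)
  have ha : |t - ((a : ℤ) : ℝ) / 10 ^ m| ≤ 1 / 10 ^ (m + N m j + 1) := by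
    simpa [Real.dist_eq] using (Metric.mem_ball.1 hball).le
  refine ⟨10 ^ (m + N m j), hj.le.trans (pow_le_pow_right₀ (by norm_num)
    ((hjN m j).trans (Nat.le_add_left _ _))), ?_⟩
  calc 1 / 2 * ‖ft μ 1‖ * φ (10 ^ (m + N m j)) ≤ 1 / 2 * ‖ft μ 1‖ * (1 / 3) ^ m := by
        gcongr; exact hφN m j
    _ = (1 / 3) ^ m * ‖ft μ 1‖ / 2 := by ring
    _ ≤ _ := norm_ft_ten_pow_ge h ha

/-- For every `φ : [0,∞) → (0,1]` tending to `0`, there is a dense `G_δ` set `A ⊆ [0,1]`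
such that for all `t ∈ A`, `limsup_{ξ→∞} |μ̂_t(ξ)| / φ(ξ) > 0`. -/
theorem stmt11 (φ : ℝ → ℝ) (hφ : ∀ ξ : ℝ, 0 ≤ ξ → φ ξ ∈ Set.Ioc (0 : ℝ) 1)
    (hφ0 : Tendsto φ atTop (nhds 0)) :
    ∃ A : Set ℝ, A ⊆ Set.Icc 0 1 ∧ IsGδ A ∧ Set.Icc (0 : ℝ) 1 ⊆ closure A ∧
      ∀ t ∈ A, ∀ μ : Measure ℝ, IsProbabilityMeasure μ → muInv t μ →
        ∃ C > 0, ∃ᶠ ξ : ℝ in atTop, C * φ ξ ≤ ‖ft μ ξ‖ :=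
  stmt11_general φ hφ0
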